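/- arXiv:1902.01027 — 6 statements merged into one kernel-verified Lean document; each statement's English description precedes it below -/
import Mathlib

section
/- Suppose integers a₂, a₃, a₂', a₃', c, with a ≥ 1, satisfy c(8a−4) = −a₂ + a₂'(−2a+1) + a₃'(−2a) and c(8a+4) = a₃ + a₂'(−2a) + a₃'(−2a−1), where a₂, a₃, a₂', a₃' ≥ 0. Then a₂ = a₃ = a₂' = a₃' = 0 and c = 0. -/
theorem eq_zero_and_eq_zero_of_mul_add_mul_eq_zero {R : Type*} [Semiring R] [PartialOrder R]
    [IsOrderedRing R] [NoZeroDivisors R] {p q x y : R} (hp : 0 < p) (hq : 0 < q)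
    (hx : 0 ≤ x) (hy : 0 ≤ y) (h : p * x + q * y = 0) : x = 0 ∧ y = 0 := by
  obtain ⟨hpx, hqy⟩ :=
    (add_eq_zero_iff_of_nonneg (mul_nonneg hp.le hx) (mul_nonneg hq.le hy)).1 h
  exact ⟨(mul_eq_zero.1 hpx).resolve_left hp.ne', (mul_eq_zero.1 hqy).resolve_left hq.ne'⟩

/-- Key arithmetic lemma in the non-projectivity proof for X₀(a): if nonnegative
integers a₂, a₃, a₂', a₃' and an integer c satisfy the two displayed equations,
then all of them vanish. -/
theorem stmt_9 (a a2 a3 a2' a3' c : ℤ) (ha : 1 ≤ a)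
    (h2 : 0 ≤ a2) (h3 : 0 ≤ a3) (h2' : 0 ≤ a2') (h3' : 0 ≤ a3')
    (e1 : c * (8 * a - 4) = -a2 + a2' * (-2 * a + 1) + a3' * (-2 * a))
    (e2 : c * (8 * a + 4) = a3 + a2' * (-2 * a) + a3' * (-2 * a - 1)) :
    a2 = 0 ∧ a3 = 0 ∧ a2' = 0 ∧ a3' = 0 ∧ c = 0 := by
  have eliminate_c : (2 * a + 1) * (a2 + a3') + (2 * a - 1) * (a3 + a2') = 0 := by
    linear_combination (2 * a + 1) * e1 - (2 * a - 1) * e2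
  obtain ⟨h2_add, h3_add⟩ := eq_zero_and_eq_zero_of_mul_add_mul_eq_zero (by omega) (by omega)
    (add_nonneg h2 h3') (add_nonneg h3 h2') eliminate_c
  obtain ⟨rfl, rfl⟩ := (add_eq_zero_iff_of_nonneg h2 h3').1 h2_add
  obtain ⟨rfl, rfl⟩ := (add_eq_zero_iff_of_nonneg h3 h2').1 h3_add
  have hc : c * (8 * a - 4) = 0 := by simpa using e1
  exact ⟨rfl, rfl, rfl, rfl, (mul_eq_zero.1 hc).resolve_right (by omega)⟩
end

section
/- Let R1 → R̄ and R2 → R̄ be surjective ring homomorphisms of commutative rings, and R = R1 ×_{R̄} R2 the fiber product. For f = (f1, f2) ∈ R with common image f̄ ∈ R̄, the localization R_f is isomorphic to (R1)_{f1} ×_{R̄_{f̄}} (R2)_{f2}. -/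
/-!
Localization is exact, so it commutes with the fiber product, which is an equalizer.
Concretely, a pair of fractions `(x₁, x₂)` with equal images in `R̄_{f̄}` can be brought to a common
denominator coming from `f`, and then the numerators become compatible in `R̄` after multiplying by
one more element coming from `f`; injectivity is checked componentwise in the same way.
-/

/-- The fiber product `R₁ ×_{R̄} R₂` of two ring maps, as a subring of `R₁ × R₂`. -/
def ringFiberProduct {A B C : Type*} [CommRing A] [CommRing B] [CommRing C]
    (g1 : A →+* C) (g2 : B →+* C) : Subring (A × B) :=
  (g1.comp (RingHom.fst A B)).eqLocus (g2.comp (RingHom.snd A B))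

namespace ringFiberProduct

variable {A B C : Type*} [CommRing A] [CommRing B] [CommRing C] {g1 : A →+* C} {g2 : B →+* C}

variable (g1 g2) in
def fst : ringFiberProduct g1 g2 →+* A := (RingHom.fst A B).comp (Subring.subtype _)

variable (g1 g2) in
def snd : ringFiberProduct g1 g2 →+* B := (RingHom.snd A B).comp (Subring.subtype _)

theorem map_fst_eq_map_snd (x : ringFiberProduct g1 g2) : g1 (fst g1 g2 x) = g2 (snd g1 g2 x) :=
  x.2

@[ext]
theorem ext {x y : ringFiberProduct g1 g2} (h₁ : fst g1 g2 x = fst g1 g2 y)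
    (h₂ : snd g1 g2 x = snd g1 g2 y) : x = y :=
  Subtype.ext (Prod.ext h₁ h₂)

theorem isUnit_of_isUnit_fst_of_isUnit_snd {x : ringFiberProduct g1 g2}
    (h₁ : IsUnit (fst g1 g2 x)) (h₂ : IsUnit (snd g1 g2 x)) : IsUnit x := by
  obtain ⟨u₁, hu₁⟩ := h₁
  obtain ⟨u₂, hu₂⟩ := h₂
  have hu : g1 u₁ = g2 u₂ := by rw [hu₁, hu₂]; exact map_fst_eq_map_snd x
  have hinv : g1 ↑u₁⁻¹ = g2 ↑u₂⁻¹ := by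
    calc g1 ↑u₁⁻¹ = g1 ↑u₁⁻¹ * (g2 u₂ * g2 ↑u₂⁻¹) := by
          rw [← map_mul, u₂.mul_inv, map_one, mul_one]
      _ = g1 (↑u₁⁻¹ * u₁) * g2 ↑u₂⁻¹ := by rw [← hu, map_mul, mul_assoc]
      _ = g2 ↑u₂⁻¹ := by rw [u₁.inv_mul, map_one, one_mul]
  refine IsUnit.of_mul_eq_one (⟨(↑u₁⁻¹, ↑u₂⁻¹), hinv⟩ : ringFiberProduct g1 g2) (ext ?_ ?_)
  · show fst g1 g2 x * ↑u₁⁻¹ = 1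
    rw [← hu₁, u₁.mul_inv]
  · show snd g1 g2 x * ↑u₂⁻¹ = 1
    rw [← hu₂, u₂.mul_inv]

variable {A' B' C' : Type*} [CommRing A'] [CommRing B'] [CommRing C']
  [Algebra A A'] [Algebra B B'] [Algebra C C'] {h1 : A' →+* C'} {h2 : B' →+* C'}
  (hsq1 : ∀ a, h1 (algebraMap A A' a) = algebraMap C C' (g1 a))
  (hsq2 : ∀ b, h2 (algebraMap B B' b) = algebraMap C C' (g2 b))

def map : ringFiberProduct g1 g2 →+* ringFiberProduct h1 h2 :=
  (((algebraMap A A').prodMap (algebraMap B B')).comp (Subring.subtype _)).codRestrict _ fun x =>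
    show h1 (algebraMap A A' (fst g1 g2 x)) = h2 (algebraMap B B' (snd g1 g2 x)) by
      rw [hsq1, hsq2, map_fst_eq_map_snd]

@[simp]
theorem fst_map (x : ringFiberProduct g1 g2) :
    fst h1 h2 (map hsq1 hsq2 x) = algebraMap A A' (fst g1 g2 x) := rfl

@[simp]
theorem snd_map (x : ringFiberProduct g1 g2) :
    snd h1 h2 (map hsq1 hsq2 x) = algebraMap B B' (snd g1 g2 x) := rfl

variable (M : Submonoid (ringFiberProduct g1 g2)) [IsLocalization (M.map (fst g1 g2)) A']
  [IsLocalization (M.map (snd g1 g2)) B']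

theorem exists_mul_map_eq_map [IsLocalization (M.map (g1.comp (fst g1 g2))) C']
    (x : ringFiberProduct h1 h2) :
    ∃ r : ringFiberProduct g1 g2, ∃ m ∈ M, x * map hsq1 hsq2 m = map hsq1 hsq2 r := by
  obtain ⟨⟨r₁, _, m₁, hm₁, rfl⟩, e₁⟩ := IsLocalization.surj (M.map (fst g1 g2)) (fst h1 h2 x)
  obtain ⟨⟨r₂, _, m₂, hm₂, rfl⟩, e₂⟩ := IsLocalization.surj (M.map (snd g1 g2)) (snd h1 h2 x)
  have e₁' : fst h1 h2 x * algebraMap A A' (fst g1 g2 (m₁ * m₂))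
      = algebraMap A A' (r₁ * fst g1 g2 m₂) := by
    rw [map_mul, map_mul, map_mul, ← e₁, mul_assoc]
  have e₂' : snd h1 h2 x * algebraMap B B' (snd g1 g2 (m₁ * m₂))
      = algebraMap B B' (r₂ * snd g1 g2 m₁) := by
    rw [map_mul, map_mul, map_mul, ← e₂]; ring
  have hC : algebraMap C C' (g1 (r₁ * fst g1 g2 m₂))
      = algebraMap C C' (g2 (r₂ * snd g1 g2 m₁)) := by
    rw [← hsq1, ← hsq2, ← e₁', ← e₂', map_mul h1, map_mul h2, hsq1, hsq2, map_fst_eq_map_snd x,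
      map_fst_eq_map_snd]
  obtain ⟨⟨_, m₃, hm₃, rfl⟩, e₃⟩ :=
    IsLocalization.exists_of_eq (M := M.map (g1.comp (fst g1 g2))) hC
  dsimp only [RingHom.comp_apply] at e₃
  refine ⟨⟨(fst g1 g2 m₃ * (r₁ * fst g1 g2 m₂), snd g1 g2 m₃ * (r₂ * snd g1 g2 m₁)), ?_⟩,
    m₃ * (m₁ * m₂), M.mul_mem hm₃ (M.mul_mem hm₁ hm₂), ext ?_ ?_⟩
  · show g1 (fst g1 g2 m₃ * (r₁ * fst g1 g2 m₂)) = g2 (snd g1 g2 m₃ * (r₂ * snd g1 g2 m₁))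
    rwa [map_mul g1, map_mul g2, ← map_fst_eq_map_snd]
  · show fst h1 h2 x * algebraMap A A' (fst g1 g2 (m₃ * (m₁ * m₂)))
      = algebraMap A A' (fst g1 g2 m₃ * (r₁ * fst g1 g2 m₂))
    rw [map_mul (fst g1 g2) m₃, map_mul (algebraMap A A'), map_mul (algebraMap A A'), ← e₁',
      mul_left_comm]
  · show snd h1 h2 x * algebraMap B B' (snd g1 g2 (m₃ * (m₁ * m₂)))
      = algebraMap B B' (snd g1 g2 m₃ * (r₂ * snd g1 g2 m₁))
    rw [map_mul (snd g1 g2) m₃, map_mul (algebraMap B B'), map_mul (algebraMap B B'), ← e₂',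
      mul_left_comm]

theorem exists_of_map_eq {r s : ringFiberProduct g1 g2} (h : map hsq1 hsq2 r = map hsq1 hsq2 s) :
    ∃ m ∈ M, m * r = m * s := by
  have h₁ := congrArg (fst h1 h2) h
  have h₂ := congrArg (snd h1 h2) h
  rw [fst_map, fst_map] at h₁
  rw [snd_map, snd_map] at h₂
  obtain ⟨⟨_, m₁, hm₁, rfl⟩, e₁⟩ := IsLocalization.exists_of_eq (M := M.map (fst g1 g2)) h₁
  obtain ⟨⟨_, m₂, hm₂, rfl⟩, e₂⟩ := IsLocalization.exists_of_eq (M := M.map (snd g1 g2)) h₂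
  refine ⟨m₁ * m₂, M.mul_mem hm₁ hm₂, ext ?_ ?_⟩
  · simp only [map_mul] at e₁ ⊢
    linear_combination fst g1 g2 m₂ * e₁
  · simp only [map_mul] at e₂ ⊢
    linear_combination snd g1 g2 m₁ * e₂

theorem isLocalization_map [IsLocalization (M.map (g1.comp (fst g1 g2))) C'] :
    letI := (map hsq1 hsq2).toAlgebra
    IsLocalization M (ringFiberProduct h1 h2) := by
  let := (map hsq1 hsq2).toAlgebra
  refine ⟨fun ⟨m, hm⟩ => ?_, fun x => ?_, fun {r s} h => ?_⟩
  · exact isUnit_of_isUnit_fst_of_isUnit_snd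
      (IsLocalization.map_units A' (⟨_, Submonoid.mem_map_of_mem _ hm⟩ : M.map (fst g1 g2)))
      (IsLocalization.map_units B' (⟨_, Submonoid.mem_map_of_mem _ hm⟩ : M.map (snd g1 g2)))
  · obtain ⟨r, m, hm, e⟩ := exists_mul_map_eq_map hsq1 hsq2 M x
    exact ⟨(r, ⟨m, hm⟩), e⟩
  · obtain ⟨m, hm, e⟩ := exists_of_map_eq hsq1 hsq2 M h
    exact ⟨⟨m, hm⟩, e⟩

end ringFiberProduct

theorem Localization.awayMap_algebraMap {R S : Type*} [CommRing R] [CommRing S] (g : R →+* S)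
    (r a : R) :
    Localization.awayMap g r (algebraMap R (Localization.Away r) a)
      = algebraMap S (Localization.Away (g r)) (g a) :=
  IsLocalization.map_eq _ a

theorem Localization.cast_awayMap_algebraMap {R S : Type*} [CommRing R] [CommRing S]
    (g : R →+* S) {r : R} {s : S} (h : g r = s) (a : R) :
    (h ▸ Localization.awayMap g r : Localization.Away r →+* Localization.Away s)
        (algebraMap R (Localization.Away r) a) = algebraMap S (Localization.Away s) (g a) := by
  subst h
  exact Localization.awayMap_algebraMap g r a

open ringFiberProduct in
theorem stmt_10_general {A B C : Type*} [CommRing A] [CommRing B] [CommRing C]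
    (g1 : A →+* C) (g2 : B →+* C)
    (f : ringFiberProduct g1 g2)
    (hf : g1 (f : A × B).1 = g2 (f : A × B).2) :
    Nonempty (Localization.Away f ≃+*
      ((Localization.awayMap g1 (f : A × B).1).comp
          (RingHom.fst (Localization.Away (f : A × B).1)
            (Localization.Away (f : A × B).2))).eqLocus
        (((hf.symm ▸ Localization.awayMap g2 (f : A × B).2 :
            Localization.Away (f : A × B).2 →+* Localization.Away (g1 (f : A × B).1))).comp
          (RingHom.snd (Localization.Away (f : A × B).1)
            (Localization.Away (f : A × B).2)))) := by
  have hA : IsLocalization ((Submonoid.powers f).map (fst g1 g2))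
      (Localization.Away (f : A × B).1) := by
    rw [Submonoid.map_powers]; exact Localization.isLocalization
  have hB : IsLocalization ((Submonoid.powers f).map (snd g1 g2))
      (Localization.Away (f : A × B).2) := by
    rw [Submonoid.map_powers]; exact Localization.isLocalization
  have hC : IsLocalization ((Submonoid.powers f).map (g1.comp (fst g1 g2)))
      (Localization.Away (g1 (f : A × B).1)) := by
    rw [Submonoid.map_powers]; exact Localization.isLocalization
  have hsq1 := Localization.awayMap_algebraMap g1 (f : A × B).1
  have hsq2 := Localization.cast_awayMap_algebraMap g2 hf.symm
  let := (map hsq1 hsq2).toAlgebra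
  have := isLocalization_map hsq1 hsq2 (Submonoid.powers f)
  exact ⟨(IsLocalization.algEquiv (Submonoid.powers f) (Localization.Away f)
    (ringFiberProduct (Localization.awayMap g1 (f : A × B).1)
      (hf.symm ▸ Localization.awayMap g2 (f : A × B).2 :
        Localization.Away (f : A × B).2 →+* Localization.Away (g1 (f : A × B).1)))).toRingEquiv⟩

/-- For surjections `g1 : R₁ → R̄`, `g2 : R₂ → R̄` and `f = (f₁, f₂)` in
`R = R₁ ×_{R̄} R₂` with common image `f̄`, the localization `R_f` is isomorphic to
`(R₁)_{f₁} ×_{R̄_{f̄}} (R₂)_{f₂}`. -/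
theorem stmt_10 {A B C : Type*} [CommRing A] [CommRing B] [CommRing C]
    (g1 : A →+* C) (g2 : B →+* C)
    (hg1 : Function.Surjective g1) (hg2 : Function.Surjective g2)
    (f : ringFiberProduct g1 g2)
    (hf : g1 (f : A × B).1 = g2 (f : A × B).2) :
    Nonempty (Localization.Away f ≃+*
      ((Localization.awayMap g1 (f : A × B).1).comp
          (RingHom.fst (Localization.Away (f : A × B).1)
            (Localization.Away (f : A × B).2))).eqLocus
        (((hf.symm ▸ Localization.awayMap g2 (f : A × B).2 :
            Localization.Away (f : A × B).2 →+* Localization.Away (g1 (f : A × B).1))).comp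
          (RingHom.snd (Localization.Away (f : A × B).1)
            (Localization.Away (f : A × B).2)))) :=
  stmt_10_general g1 g2 f hf
end

section
/- Let R1 → R̄ and R2 → R̄ be surjective ring homomorphisms, R = R1 ×_{R̄} R2, and 𝔪 ⊂ R an ideal with images 𝔪₁ ⊂ R1, 𝔪₂ ⊂ R2, 𝔪̄ ⊂ R̄ such that 𝔪 = 𝔪₁ ×_{𝔪̄} 𝔪₂. If 𝔪^k = 𝔪₁^k ×_{𝔪̄^k} 𝔪₂^k for all k ≥ 0, then R/𝔪^k ≅ R1/𝔪₁^k ×_{R̄/𝔪̄^k} R2/𝔪₂^k. -/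
/-!
The map `R → A/I₁ × B/I₂` lands in the fiber product over `C/J` and has kernel
`p₁⁻¹ I₁ ∩ p₂⁻¹ I₂`, which is `I` by hypothesis. It is onto the fiber product: if `g₁ y ≡ g₂ z`
modulo `J = g₂(I₂)`, correct `z` by some `w ∈ I₂` with `g₂ w = g₁ y - g₂ z`; then `(y, z + w)`
lies in the fiber product `A ×_C B` and lifts to `R`.
-/

namespace Ideal

variable {R A B C : Type*} [CommRing R] [CommRing A] [CommRing B] [CommRing C]
  {p1 : R →+* A} {p2 : R →+* B} {g1 : A →+* C} {g2 : B →+* C}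

theorem exists_fiber_lift_of_sub_mem_map (hg2 : Function.Surjective g2)
    (hfib : ∀ y z, g1 y = g2 z → ∃ x : R, p1 x = y ∧ p2 x = z)
    {I2 : Ideal B} {y : A} {z : B} (h : g1 y - g2 z ∈ I2.map g2) :
    ∃ x : R, p1 x = y ∧ p2 x - z ∈ I2 := by
  obtain ⟨w, hw, hgw⟩ := (mem_map_iff_of_surjective g2 hg2).1 h
  obtain ⟨x, hx1, hx2⟩ := hfib y (z + w) (by rw [map_add, hgw]; ring)
  exact ⟨x, hx1, by rwa [hx2, add_sub_cancel_left]⟩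

variable (p1 p2) (I1 : Ideal A) (I2 : Ideal B)

def toQuotientProd : R →+* (A ⧸ I1) × (B ⧸ I2) :=
  ((Quotient.mk I1).comp p1).prod ((Quotient.mk I2).comp p2)

theorem ker_toQuotientProd :
    RingHom.ker (toQuotientProd p1 p2 I1 I2) = I1.comap p1 ⊓ I2.comap p2 := by
  ext x
  simp [toQuotientProd, Prod.ext_iff, Quotient.eq_zero_iff_mem]

variable (J : Ideal C) (h1 : I1 ≤ J.comap g1) (h2 : I2 ≤ J.comap g2)

abbrev quotientFiberProd : Subring ((A ⧸ I1) × (B ⧸ I2)) :=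
  ((quotientMap J g1 h1).comp (RingHom.fst _ _)).eqLocus
    ((quotientMap J g2 h2).comp (RingHom.snd _ _))

variable {p1 p2 I1 I2 J h1 h2}

theorem toQuotientProd_mem_quotientFiberProd (hcomm : ∀ x, g1 (p1 x) = g2 (p2 x)) (x : R) :
    toQuotientProd p1 p2 I1 I2 x ∈ quotientFiberProd I1 I2 J h1 h2 := by
  simp [toQuotientProd, hcomm]

def toQuotientFiberProd (hcomm : ∀ x, g1 (p1 x) = g2 (p2 x)) :
    R →+* quotientFiberProd I1 I2 J h1 h2 :=
  (toQuotientProd p1 p2 I1 I2).codRestrict _ (toQuotientProd_mem_quotientFiberProd hcomm)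

theorem ker_toQuotientFiberProd (hcomm : ∀ x, g1 (p1 x) = g2 (p2 x)) :
    RingHom.ker (toQuotientFiberProd (h1 := h1) (h2 := h2) hcomm) =
      I1.comap p1 ⊓ I2.comap p2 := by
  rw [← ker_toQuotientProd]
  ext x
  simp only [RingHom.mem_ker, Subtype.ext_iff]
  rfl

theorem toQuotientFiberProd_surjective (hcomm : ∀ x, g1 (p1 x) = g2 (p2 x))
    (hg2 : Function.Surjective g2)
    (hfib : ∀ y z, g1 y = g2 z → ∃ x : R, p1 x = y ∧ p2 x = z) (hJ : J ≤ I2.map g2) :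
    Function.Surjective (toQuotientFiberProd (h1 := h1) (h2 := h2) hcomm) := by
  rintro ⟨⟨a, b⟩, hab⟩
  obtain ⟨y, rfl⟩ := Quotient.mk_surjective a
  obtain ⟨z, rfl⟩ := Quotient.mk_surjective b
  have hyz : g1 y - g2 z ∈ J := by simpa [Quotient.eq] using hab
  obtain ⟨x, hx1, hx2⟩ := exists_fiber_lift_of_sub_mem_map hg2 hfib (hJ hyz)
  refine ⟨x, Subtype.ext (Prod.ext ?_ ?_)⟩
  · simp [toQuotientFiberProd, toQuotientProd, hx1]
  · simpa [toQuotientFiberProd, toQuotientProd, Quotient.eq] using hx2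

noncomputable def quotientEquivQuotientFiberProd (I : Ideal R)
    (hcomm : ∀ x, g1 (p1 x) = g2 (p2 x)) (hg2 : Function.Surjective g2)
    (hfib : ∀ y z, g1 y = g2 z → ∃ x : R, p1 x = y ∧ p2 x = z)
    (hI : I = I1.comap p1 ⊓ I2.comap p2) (hJ : J ≤ I2.map g2) :
    R ⧸ I ≃+* quotientFiberProd I1 I2 J h1 h2 :=
  (quotEquivOfEq (hI.trans (ker_toQuotientFiberProd hcomm).symm)).trans
    (RingHom.quotientKerEquivOfSurjective (toQuotientFiberProd_surjective hcomm hg2 hfib hJ))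

end Ideal

/-- For surjections `g1 : R₁ → R̄`, `g2 : R₂ → R̄`, a ring `R` which is the fiber
product `R₁ ×_{R̄} R₂` (via projections `p1`, `p2`), an ideal `𝔪 ⊂ R` with images
`𝔪₁ = p1(𝔪)`, `𝔪₂ = p2(𝔪)`, `𝔪̄ = g1(𝔪₁) = g2(𝔪₂)`, if
`𝔪^k = 𝔪₁^k ×_{𝔪̄^k} 𝔪₂^k` then `R/𝔪^k ≅ R₁/𝔪₁^k ×_{R̄/𝔪̄^k} R₂/𝔪₂^k`. -/
theorem stmt_11 {R A B C : Type*} [CommRing R] [CommRing A] [CommRing B] [CommRing C]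
    (p1 : R →+* A) (p2 : R →+* B) (g1 : A →+* C) (g2 : B →+* C)
    (hg2 : Function.Surjective g2)
    (hcomm : ∀ x : R, g1 (p1 x) = g2 (p2 x))
    (hfib : ∀ (y : A) (z : B), g1 y = g2 z → ∃! x : R, p1 x = y ∧ p2 x = z)
    (m : Ideal R) (m1 : Ideal A) (m2 : Ideal B) (mb : Ideal C)
    (hmb1 : mb = Ideal.map g1 m1) (hmb2 : mb = Ideal.map g2 m2)
    (k : ℕ)
    (hpow : ∀ x : R, x ∈ m ^ k ↔ p1 x ∈ m1 ^ k ∧ p2 x ∈ m2 ^ k) :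
    Nonempty ((R ⧸ m ^ k) ≃+*
      ((Ideal.quotientMap (mb ^ k) g1
            (by rw [hmb1, ← Ideal.map_pow]; exact Ideal.le_comap_map)).comp
          (RingHom.fst (A ⧸ m1 ^ k) (B ⧸ m2 ^ k))).eqLocus
        ((Ideal.quotientMap (mb ^ k) g2
            (by rw [hmb2, ← Ideal.map_pow]; exact Ideal.le_comap_map)).comp
          (RingHom.snd (A ⧸ m1 ^ k) (B ⧸ m2 ^ k)))) := by
  have hI : m ^ k = (m1 ^ k).comap p1 ⊓ (m2 ^ k).comap p2 := by
    ext x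
    exact hpow x
  have hJ : mb ^ k ≤ (m2 ^ k).map g2 := by rw [hmb2, Ideal.map_pow]
  exact ⟨Ideal.quotientEquivQuotientFiberProd (m ^ k) hcomm hg2
    (fun y z h => (hfib y z h).exists) hI hJ⟩
end

section
/- Let π1 : ℂ[[s1,…,sn]] → ℂ[[u1,…,u_{n−1}]] and π2 : ℂ[[t1,…,tn]] → ℂ[[u1,…,u_{n−1}]] be surjective local ℂ-algebra homomorphisms with π1(sᵢ) = uᵢ, π2(tᵢ) = uᵢ for i < n and π1(sₙ) = π2(tₙ) = 0. Then the fiber product ℂ[[s]] ×_{ℂ[[u]]} ℂ[[t]] is isomorphic as a ℂ-algebra to ℂ[[z1,…,z_{n+1}]]/(zₙ·z_{n+1}). -/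
/-!
Both projections are forced to be `killCompl` of `Fin.castSuccEmb`, i.e. "set the last variable
to zero": an algebra map between power series rings in finitely many variables that sends the
variables to series without constant term is determined by these images, because a series of
order `≥ n` lies in the `n`-th power of the ideal generated by the variables.

The fiber product then consists of pairs `(f, g)` that agree once the last variable is set to
zero. Read `f` as a series in `z₀, …, z_m` and `g` as a series in `z₀, …, z_{m-1}, z_{m+1}`.
The map `h ↦ (h(z_{m+1} = 0), h(z_m = 0))` is onto, since `f + g - f(z_m = 0)` is a preimage.
Its kernel is the set of series divisible by both `z_m` and `z_{m+1}`, i.e. by `z_m z_{m+1}`.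
-/

open MvPowerSeries Finsupp

noncomputable section

theorem Finsupp.range_mapDomain_eq_range_embDomain {α β M : Type*} [AddCommMonoid M]
    (e : α ↪ β) : Set.range (mapDomain e : (α →₀ M) → β →₀ M) = Set.range (embDomain e) := by
  congr 1
  ext1 v
  exact (embDomain_eq_mapDomain e v).symm

namespace MvPowerSeries

variable {σ τ α β γ R : Type*} [CommRing R]

theorem exists_eq_sum_X_mul [Fintype σ] {n : ℕ} {f : MvPowerSeries σ R}
    (hf : ((n + 1 : ℕ) : ℕ∞) ≤ f.order) :
    ∃ g : σ → MvPowerSeries σ R, f = ∑ i, X i * g i ∧ ∀ i, (n : ℕ∞) ≤ (g i).order := by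
  classical
  -- `c d` is a variable occurring in the monomial `d`; `g i` collects the terms assigned to `i`.
  choose c hc using fun (d : σ →₀ ℕ) (hd : d ≠ 0) => Finsupp.support_nonempty_iff.mpr hd
  have hne : ∀ (i : σ) (d : σ →₀ ℕ), d + single i 1 ≠ 0 := fun i d => by simp
  set g : σ → MvPowerSeries σ R := fun i d =>
    if c (d + single i 1) (hne i d) = i then coeff (d + single i 1) f else 0
  have coeff_g : ∀ i d, coeff d (g i) =
      if c (d + single i 1) (hne i d) = i then coeff (d + single i 1) f else 0 := fun _ _ => rfl
  refine ⟨g, ?_, fun i => le_order fun d hd => ?_⟩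
  · ext d
    have hX : ∀ i, coeff d (X i * g i) =
        if ∃ h : d ≠ 0, c d h = i then coeff d f else 0 := by
      intro i
      rw [X, coeff_monomial_mul, one_mul]
      split_ifs with hle hci hci
      · obtain ⟨hd, rfl⟩ := hci
        simp only [coeff_g, tsub_add_cancel_of_le hle, if_true]
      · simp only [coeff_g, tsub_add_cancel_of_le hle]
        exact if_neg fun h => hci ⟨_, h⟩
      · obtain ⟨hd, rfl⟩ := hci
        exact absurd (single_le_iff.mpr (Nat.one_le_iff_ne_zero.mpr
          (Finsupp.mem_support_iff.mp (hc d hd)))) hle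
      · rfl
    rw [map_sum, Finset.sum_congr rfl fun i _ => hX i]
    by_cases hd : d = 0
    · subst hd
      simpa using one_le_order_iff_constCoeff_eq_zero.mp (le_trans (by simp) hf)
    · simp [hd]
  · have : ((d + single i 1).degree : ℕ∞) < f.order := by
      refine lt_of_lt_of_le ?_ hf
      simp only [map_add, degree_single]
      exact_mod_cast Nat.add_lt_add_right (by exact_mod_cast hd) 1
    simp [coeff_g, coeff_of_lt_order this]

theorem mem_pow_span_X_of_le_order [Finite σ] {n : ℕ} {f : MvPowerSeries σ R}
    (hf : (n : ℕ∞) ≤ f.order) : f ∈ Ideal.span (Set.range X) ^ n := by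
  cases nonempty_fintype σ
  induction n generalizing f with
  | zero => simp
  | succ n ih =>
    obtain ⟨g, rfl, hg⟩ := exists_eq_sum_X_mul hf
    rw [pow_succ']
    exact Ideal.sum_mem _ fun i _ => Ideal.mul_mem_mul (Ideal.subset_span ⟨i, rfl⟩) (ih (hg i))

theorem le_order_of_mem_pow_ker_constantCoeff {n : ℕ} {f : MvPowerSeries σ R}
    (hf : f ∈ RingHom.ker (constantCoeff (σ := σ) (R := R)) ^ n) : (n : ℕ∞) ≤ f.order := by
  induction n generalizing f with
  | zero => simp
  | succ n ih =>
    rw [pow_succ] at hf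
    refine Submodule.mul_induction_on hf (fun a ha b hb => ?_) fun a b ha hb => ?_
    · calc ((n + 1 : ℕ) : ℕ∞) = n + 1 := by push_cast; rfl
        _ ≤ a.order + b.order := add_le_add (ih ha) (one_le_order_iff_constCoeff_eq_zero.2 hb)
        _ ≤ (a * b).order := le_order_mul
    · exact (le_min ha hb).trans min_order_le_add

theorem le_order_map_of_mem_pow_span_X {π : MvPowerSeries σ R →ₐ[R] MvPowerSeries τ R}
    (hπ : ∀ i, constantCoeff (π (X i)) = 0) {n : ℕ} {f : MvPowerSeries σ R}
    (hf : f ∈ Ideal.span (Set.range X) ^ n) : (n : ℕ∞) ≤ (π f).order := by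
  have hmap : Ideal.map π (Ideal.span (Set.range X)) ≤ RingHom.ker constantCoeff := by
    rw [Ideal.map_span, Ideal.span_le]
    rintro _ ⟨_, ⟨i, rfl⟩, rfl⟩
    exact hπ i
  refine le_order_of_mem_pow_ker_constantCoeff (Ideal.pow_right_mono hmap n ?_)
  exact Ideal.map_pow π _ n ▸ Ideal.mem_map_of_mem π hf

theorem algHom_ext_of_X [Finite σ] {π ρ : MvPowerSeries σ R →ₐ[R] MvPowerSeries τ R}
    (hπ : ∀ i, constantCoeff (π (X i)) = 0) (h : ∀ i, π (X i) = ρ (X i)) : π = ρ := by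
  have hρ : ∀ i, constantCoeff (ρ (X i)) = 0 := fun i => h i ▸ hπ i
  have hpoly : ∀ p : MvPolynomial σ R, π p = ρ p := by
    have := MvPolynomial.algHom_ext (f := π.comp (MvPolynomial.coeToMvPowerSeries.algHom R))
      (g := ρ.comp (MvPolynomial.coeToMvPowerSeries.algHom R)) (by simpa using h)
    exact fun p => by simpa using AlgHom.congr_fun this p
  ext f d
  set N := degree d + 1
  have hrest : f - truncTotal N f ∈ Ideal.span (Set.range X) ^ N :=
    mem_pow_span_X_of_le_order <| le_order fun e he => by
      simp [coeff_truncTotal _ (Nat.cast_lt.mp he)]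
  have hdN : ((degree d : ℕ) : ℕ∞) < N := Nat.cast_lt.mpr d.degree.lt_succ_self
  have coeff_eq_coeff_truncTotal : ∀ θ : MvPowerSeries σ R →ₐ[R] MvPowerSeries τ R,
      (∀ i, constantCoeff (θ (X i)) = 0) → coeff d (θ f) = coeff d (θ (truncTotal N f)) := by
    intro θ hθ
    have := coeff_of_lt_order (hdN.trans_le (le_order_map_of_mem_pow_span_X hθ hrest))
    rwa [map_sub, map_sub, sub_eq_zero] at this
  rw [coeff_eq_coeff_truncTotal π hπ, coeff_eq_coeff_truncTotal ρ hρ, hpoly]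

theorem eq_killCompl_of_X [Finite τ] {e : σ ↪ τ}
    {π : MvPowerSeries τ R →ₐ[R] MvPowerSeries σ R} (h₁ : ∀ i, π (X (e i)) = X i)
    (h₂ : ∀ t ∉ Set.range e, π (X t) = 0) : π = killCompl e := by
  have hX : ∀ t, π (X t) = killCompl e (X t) := fun t => by
    by_cases ht : t ∈ Set.range e
    · obtain ⟨i, rfl⟩ := ht
      rw [h₁, killCompl_X]
    · rw [h₂ t ht, killCompl_X_eq_zero ht]
  refine algHom_ext_of_X (fun t => ?_) hX
  rw [hX, ← coeff_zero_eq_constantCoeff_apply, coeff_killCompl, embDomain_zero, coeff_zero_X]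

theorem killCompl_rename_of_range_inter_subset {e₁ : α ↪ τ} {e₂ : β ↪ τ} {c₁ : γ ↪ α}
    {c₂ : γ ↪ β} (hcomm : c₁.trans e₁ = c₂.trans e₂)
    (hinter : Set.range e₁ ∩ Set.range e₂ ⊆ Set.range (c₁.trans e₁)) (g : MvPowerSeries β R) :
    killCompl e₁ (rename e₂ g) = rename c₁ (killCompl c₂ g) := by
  ext d
  by_cases hd : d ∈ Set.range (embDomain c₁)
  · obtain ⟨d, rfl⟩ := hd
    rw [coeff_killCompl, ← embDomain_trans_apply, hcomm, embDomain_trans_apply,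
      coeff_embDomain_rename, coeff_embDomain_rename, coeff_killCompl]
  · rw [coeff_killCompl, coeff_rename_eq_zero, coeff_rename_eq_zero]
    · rwa [range_mapDomain_eq_range_embDomain]
    rw [range_mapDomain_eq_range_embDomain, mem_range_embDomain_iff]
    intro h₂
    have h₁ : ↑(embDomain e₁ d).support ⊆ Set.range e₁ := by
      rw [support_embDomain, Finset.coe_map]; exact Set.image_subset_range _ _
    obtain ⟨d', hd'⟩ := (mem_range_embDomain_iff _ _).mpr ((Set.subset_inter h₁ h₂).trans hinter)
    rw [embDomain_trans_apply] at hd'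
    exact hd ⟨d', embDomain_injective e₁ hd'⟩

theorem killCompl_killCompl (c : γ ↪ α) (e : α ↪ τ) (h : MvPowerSeries τ R) :
    killCompl c (killCompl e h) = killCompl (c.trans e) h := by
  ext d
  rw [coeff_killCompl, coeff_killCompl, coeff_killCompl, embDomain_trans_apply]

theorem killCompl_eq_zero_iff_X_dvd {e : α ↪ τ} {t : τ} (ht : Set.range e = {t}ᶜ)
    {h : MvPowerSeries τ R} : killCompl e h = 0 ↔ X t ∣ h := by
  rw [X_dvd_iff]
  constructor
  · intro h0 d hd
    obtain ⟨d, rfl⟩ : d ∈ Set.range (embDomain e) := by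
      rw [mem_range_embDomain_iff, ht]
      intro s hs hst
      rw [Set.mem_singleton_iff.mp hst, Finset.mem_coe, Finsupp.mem_support_iff] at hs
      exact hs hd
    rw [← coeff_killCompl, h0, map_zero]
  · intro H
    ext d
    rw [coeff_killCompl, map_zero]
    exact H _ (embDomain_of_notMem_range _ _ _ (by simp [ht]))

theorem X_mul_X_dvd_iff {a b : σ} (hab : a ≠ b) {h : MvPowerSeries σ R} :
    X a * X b ∣ h ↔ X a ∣ h ∧ X b ∣ h := by
  refine ⟨fun hd => ⟨(dvd_mul_right _ _).trans hd, (dvd_mul_left _ _).trans hd⟩, ?_⟩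
  rintro ⟨⟨g, rfl⟩, hb⟩
  refine mul_dvd_mul_left _ (X_dvd_iff.mpr fun d hd => ?_)
  rw [X_dvd_iff] at hb
  have := hb (single a 1 + d) (by simp [hab.symm, hd])
  rwa [X, coeff_add_monomial_mul, one_mul] at this

section FiberProduct

variable (R) {e₁ : α ↪ τ} {e₂ : β ↪ τ} {c₁ : γ ↪ α} {c₂ : γ ↪ β}

abbrev FiberProduct (c₁ : γ ↪ α) (c₂ : γ ↪ β) :=
  AlgHom.equalizer ((killCompl (R := R) c₁).comp (AlgHom.fst R _ (MvPowerSeries β R)))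
    ((killCompl (R := R) c₂).comp (AlgHom.snd R (MvPowerSeries α R) _))

def toFiberProduct (hcomm : c₁.trans e₁ = c₂.trans e₂) :
    MvPowerSeries τ R →ₐ[R] FiberProduct R c₁ c₂ :=
  ((killCompl e₁).prod (killCompl e₂)).codRestrict _ fun h => by
    simp [AlgHom.mem_equalizer, killCompl_killCompl, hcomm]

variable {R}

theorem toFiberProduct_surjective (hcomm : c₁.trans e₁ = c₂.trans e₂)
    (hinter : Set.range e₁ ∩ Set.range e₂ ⊆ Set.range (c₁.trans e₁)) :
    Function.Surjective (toFiberProduct R hcomm) := by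
  rintro ⟨⟨f, g⟩, hfg⟩
  replace hfg : killCompl c₁ f = killCompl c₂ g := hfg
  have base₁ := killCompl_rename_of_range_inter_subset (R := R) hcomm hinter
  have base₂ := killCompl_rename_of_range_inter_subset (R := R) hcomm.symm
    (by rwa [Set.inter_comm, ← hcomm])
  refine ⟨rename e₁ f + rename e₂ g - rename e₁ (rename c₁ (killCompl c₁ f)), Subtype.ext ?_⟩
  refine Prod.ext ?_ ?_
  · show killCompl e₁ _ = f
    rw [map_sub, map_add, killCompl_rename_app, killCompl_rename_app, base₁, hfg,
      add_sub_cancel_right]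
  · show killCompl e₂ _ = g
    rw [map_sub, map_add, killCompl_rename_app, base₂, base₂, killCompl_rename_app,
      add_sub_cancel_left]

theorem ker_toFiberProduct (hcomm : c₁.trans e₁ = c₂.trans e₂) {a b : τ} (hab : a ≠ b)
    (h₁ : Set.range e₁ = {b}ᶜ) (h₂ : Set.range e₂ = {a}ᶜ) :
    RingHom.ker (toFiberProduct R hcomm) = Ideal.span {X a * X b} := by
  ext h
  rw [RingHom.mem_ker, Ideal.mem_span_singleton, X_mul_X_dvd_iff hab,
    ← killCompl_eq_zero_iff_X_dvd h₂, ← killCompl_eq_zero_iff_X_dvd h₁, and_comm]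
  exact Subtype.ext_iff.trans Prod.ext_iff

end FiberProduct

end MvPowerSeries

namespace Fin

theorem castSuccEmb_trans_succAboveEmb_last (n : ℕ) :
    castSuccEmb.trans (succAboveEmb (last (n + 1))) =
      castSuccEmb.trans (succAboveEmb (last n).castSucc) := by
  ext i
  simp only [Function.Embedding.trans_apply, coe_castSuccEmb, succAboveEmb_apply,
    succAbove_last, succAbove_castSucc_of_lt _ _ (castSucc_lt_last i)]

theorem range_succAboveEmb_last_inter_subset (n : ℕ) :
    Set.range (succAboveEmb (last (n + 1))) ∩ Set.range (succAboveEmb (last n).castSucc) ⊆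
      Set.range (castSuccEmb.trans (succAboveEmb (last (n + 1)))) := by
  simp only [coe_succAboveEmb, range_succAbove]
  rintro k ⟨hk₁, hk₂⟩
  simp only [Set.mem_compl_iff, Set.mem_singleton_iff, Fin.ext_iff, val_last,
    val_castSucc] at hk₁ hk₂
  exact ⟨⟨k, by omega⟩, Fin.ext (by simp)⟩

end Fin

namespace MvPowerSeries

variable (R : Type*) [CommRing R]

def finFiberProductEquiv (n : ℕ) :
    FiberProduct R (Fin.castSuccEmb : Fin n ↪ Fin (n + 1)) Fin.castSuccEmb ≃ₐ[R]
      MvPowerSeries (Fin (n + 2)) R ⧸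
        Ideal.span {(X (Fin.last n).castSucc : MvPowerSeries (Fin (n + 2)) R) *
          X (Fin.last (n + 1))} :=
  (Ideal.quotientKerAlgEquivOfSurjective <| toFiberProduct_surjective
      (Fin.castSuccEmb_trans_succAboveEmb_last n)
      (Fin.range_succAboveEmb_last_inter_subset n)).symm.trans <|
    Ideal.quotientEquivAlgOfEq R <| ker_toFiberProduct _ (Fin.castSucc_lt_last _).ne
      (Fin.range_succAbove _) (Fin.range_succAbove _)

end MvPowerSeries

end

open MvPowerSeries

/-- Let `π1 : ℂ[[s₁,…,s_{m+1}]] → ℂ[[u₁,…,u_m]]` and `π2 : ℂ[[t₁,…,t_{m+1}]] → ℂ[[u₁,…,u_m]]`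
be surjective local ℂ-algebra homomorphisms with `π1(sᵢ) = π2(tᵢ) = uᵢ` for `i ≤ m` and
`π1(s_{m+1}) = π2(t_{m+1}) = 0`.  Then the fiber product
`ℂ[[s]] ×_{ℂ[[u]]} ℂ[[t]]` is isomorphic as a ℂ-algebra to
`ℂ[[z₁,…,z_{m+2}]]/(z_{m+1}·z_{m+2})`. -/
theorem stmt_12 (m : ℕ)
    (π1 π2 : MvPowerSeries (Fin (m + 1)) ℂ →ₐ[ℂ] MvPowerSeries (Fin m) ℂ)
    (hx1 : ∀ i : Fin m, π1 (X i.castSucc) = X i)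
    (hx2 : ∀ i : Fin m, π2 (X i.castSucc) = X i)
    (hlast1 : π1 (X (Fin.last m)) = 0) (hlast2 : π2 (X (Fin.last m)) = 0) :
    Nonempty
      ((AlgHom.equalizer
          (π1.comp (AlgHom.fst ℂ (MvPowerSeries (Fin (m + 1)) ℂ)
            (MvPowerSeries (Fin (m + 1)) ℂ)))
          (π2.comp (AlgHom.snd ℂ (MvPowerSeries (Fin (m + 1)) ℂ)
            (MvPowerSeries (Fin (m + 1)) ℂ)))) ≃ₐ[ℂ]
        (MvPowerSeries (Fin (m + 2)) ℂ ⧸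
          Ideal.span {(X (⟨m, by omega⟩ : Fin (m + 2)) : MvPowerSeries (Fin (m + 2)) ℂ) *
            X (⟨m + 1, by omega⟩ : Fin (m + 2))})) := by
  have hπ : ∀ π : MvPowerSeries (Fin (m + 1)) ℂ →ₐ[ℂ] MvPowerSeries (Fin m) ℂ,
      (∀ i : Fin m, π (X i.castSucc) = X i) → π (X (Fin.last m)) = 0 →
        π = killCompl Fin.castSuccEmb := by
    intro π hx hlast
    refine eq_killCompl_of_X hx fun t ht => ?_
    obtain rfl : t = Fin.last m := by
      by_contra h
      exact ht ⟨t.castPred h, Fin.castSucc_castPred t h⟩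
    exact hlast
  obtain rfl := hπ π1 hx1 hlast1
  obtain rfl := hπ π2 hx2 hlast2
  exact ⟨finFiberProductEquiv ℂ m⟩
end

section
/- Let a ≥ 1 and k ≥ 1 be integers satisfying 30a²+20a+2−k > 0, 45a²+4−3k > 0, and 4(90a²−15a+4)−27k > 0. Let l' = (30a²+20a+8−k)f + 6e + (3a+2)v in ℤ³ with bilinear form f·e = 1, v² = −20, f² = e² = 0, f·v = e·v = 0. Then l'² = 4(45a²+4−3k) > 0, and for every (x,y,z) ∈ ℤ³ with 2xy − 20z² + 2 = 0 and y ≥ 0 (the class d = xf+ye+zv of a (−2)-curve), one has l'·d > 0. -/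
/-!
Write `l' = M f + 6 e + c v` with `M = 30a² + 20a + 8 − k` and `c = 3a + 2`, so that
`l'·d = M y + 6 x − 20 c z`. A (−2)-class with `y ≥ 0` has `x y = 10 z² − 1`, so it is either
`−f + e` (where `l'·d = M − 6`) or has `x, y > 0` and `z² ≥ 1`. In the latter case AM-GM gives
`(M y + 6 x)² ≥ 24 M x y = 24 M (10 z² − 1)`, and the hypotheses on `a, k` make this exceed
`(20 c z)²`, since
`6 M (10 z² − 1) − 100 c² z² = 20 (45a² + 4 − 3k)(z² − 1) + 2 (4(90a² − 15a + 4) − 27k)`.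
-/

/-- The intersection form of Pic S for Oguiso's quartic K3 surface (basis f, e, v):
f·e = 1, v·v = −20, all other products of basis vectors 0. -/
def oguisoForm (x y : Fin 3 → ℤ) : ℤ := x 0 * y 1 + x 1 * y 0 - 20 * (x 2 * y 2)

lemma oguisoForm_vec3 (p q r x y z : ℤ) :
    oguisoForm ![p, q, r] ![x, y, z] = p * y + q * x - 20 * (r * z) := rfl

lemma sub_pos_of_sq_lt_four_mul {R : Type*} [CommRing R] [LinearOrder R] [IsStrictOrderedRing R]
    {u v w : R} (hu : 0 ≤ u) (hv : 0 ≤ v) (h : w ^ 2 < 4 * u * v) : 0 < u + v - w := by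
  have hw : |w| < u + v :=
    abs_lt_of_sq_lt_sq (h.trans_le (four_mul_le_sq_add u v)) (add_nonneg hu hv)
  linarith [le_abs_self w]

lemma eq_neg_one_one_zero_or_pos_of_mul_eq {m x y z : ℤ} (hm : 1 < m)
    (hxy : x * y = m * z ^ 2 - 1) (hy : 0 ≤ y) :
    (x = -1 ∧ y = 1 ∧ z = 0) ∨ (0 < x ∧ 0 < y ∧ 1 ≤ z ^ 2) := by
  rcases eq_or_ne z 0 with rfl | hz
  · have hxy' : x * y = -1 := by simpa using hxy
    rcases Int.eq_one_or_neg_one_of_mul_eq_neg_one' hxy' with ⟨-, rfl⟩ | ⟨rfl, rfl⟩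
    · omega
    · exact Or.inl ⟨rfl, rfl, rfl⟩
  · have hz2 : 1 ≤ z ^ 2 := sq_pos_of_ne_zero hz
    have hpos : 0 < x * y := by nlinarith
    rcases pos_and_pos_or_neg_and_neg_of_mul_pos hpos with ⟨hx, hy'⟩ | ⟨-, hy'⟩
    · exact Or.inr ⟨hx, hy', hz2⟩
    · omega

theorem stmt_16_general (a k : ℤ)
    (h1 : 0 < 30 * a ^ 2 + 20 * a + 2 - k)
    (h2 : 0 < 45 * a ^ 2 + 4 - 3 * k)
    (h3 : 0 < 4 * (90 * a ^ 2 - 15 * a + 4) - 27 * k) :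
    oguisoForm ![30 * a ^ 2 + 20 * a + 8 - k, 6, 3 * a + 2]
        ![30 * a ^ 2 + 20 * a + 8 - k, 6, 3 * a + 2] = 4 * (45 * a ^ 2 + 4 - 3 * k) ∧
    0 < oguisoForm ![30 * a ^ 2 + 20 * a + 8 - k, 6, 3 * a + 2]
        ![30 * a ^ 2 + 20 * a + 8 - k, 6, 3 * a + 2] ∧
    ∀ x y z : ℤ, 2 * x * y - 20 * z ^ 2 + 2 = 0 → 0 ≤ y →
      0 < oguisoForm ![30 * a ^ 2 + 20 * a + 8 - k, 6, 3 * a + 2] ![x, y, z] := by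
  have hsq : oguisoForm ![30 * a ^ 2 + 20 * a + 8 - k, 6, 3 * a + 2]
      ![30 * a ^ 2 + 20 * a + 8 - k, 6, 3 * a + 2] = 4 * (45 * a ^ 2 + 4 - 3 * k) := by
    rw [oguisoForm_vec3]; ring
  refine ⟨hsq, hsq ▸ by positivity, fun x y z hd hy => ?_⟩
  rw [oguisoForm_vec3]
  have hxy : x * y = 10 * z ^ 2 - 1 := by linarith
  rcases eq_neg_one_one_zero_or_pos_of_mul_eq (by norm_num) hxy hy with
    ⟨rfl, rfl, rfl⟩ | ⟨hx, hy, hz⟩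
  · linarith
  · apply sub_pos_of_sq_lt_four_mul (mul_nonneg (by linarith) hy.le) (by linarith)
    have hdisc : 4 * ((30 * a ^ 2 + 20 * a + 8 - k) * y) * (6 * x) - (20 * ((3 * a + 2) * z)) ^ 2
        = 80 * (45 * a ^ 2 + 4 - 3 * k) * (z ^ 2 - 1)
          + 8 * (4 * (90 * a ^ 2 - 15 * a + 4) - 27 * k) := by
      linear_combination 24 * (30 * a ^ 2 + 20 * a + 8 - k) * hxy
    linarith [mul_nonneg h2.le (sub_nonneg.mpr hz)]

/-- Ampleness criterion for l' = (30a²+20a+8−k)f + 6e + (3a+2)v: l'² = 4(45a²+4−3k) > 0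
and l'·d > 0 for the class d = xf + ye + zv of every (−2)-curve (d² = −2, y = f·d ≥ 0). -/
theorem stmt_16 (a k : ℤ) (ha : 1 ≤ a) (hk : 1 ≤ k)
    (h1 : 0 < 30 * a ^ 2 + 20 * a + 2 - k)
    (h2 : 0 < 45 * a ^ 2 + 4 - 3 * k)
    (h3 : 0 < 4 * (90 * a ^ 2 - 15 * a + 4) - 27 * k) :
    oguisoForm ![30 * a ^ 2 + 20 * a + 8 - k, 6, 3 * a + 2]
        ![30 * a ^ 2 + 20 * a + 8 - k, 6, 3 * a + 2] = 4 * (45 * a ^ 2 + 4 - 3 * k) ∧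
    0 < oguisoForm ![30 * a ^ 2 + 20 * a + 8 - k, 6, 3 * a + 2]
        ![30 * a ^ 2 + 20 * a + 8 - k, 6, 3 * a + 2] ∧
    ∀ x y z : ℤ, 2 * x * y - 20 * z ^ 2 + 2 = 0 → 0 ≤ y →
      0 < oguisoForm ![30 * a ^ 2 + 20 * a + 8 - k, 6, 3 * a + 2] ![x, y, z] :=
  stmt_16_general a k h1 h2 h3
end

section
/- Let A, B > 0 be real numbers. Then (A+B)² ≥ 4AB, i.e., the inequality [6x + Ky]² ≥ 24xKy holds for reals with 6x, Ky > 0 where K > 0; consequently, if xy = 10z² − 1, x,y > 0, z² ≥ 1, K = 30a²+20a+8−k > 0, 45a²+4−3k > 0, and 4(90a²−15a+4)−27k > 0 with a ≥ 1, then (6x + Ky)² − (20(3a+2)z)² > 0. -/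
/-!
By AM–GM, `(6x + Ky)² ≥ 24·K·xy = 24K(10z² − 1)`, and
`24K(10z² − 1) − (20(3a+2)z)² = 16(5(45a² + 4 − 3k)z² − 45a² − 30a − 12) + 24k`.
Since `45a² + 4 − 3k > 0`, replacing `z²` by `1` only decreases the right-hand side, which
then equals `8(4(90a² − 15a + 4) − 27k) > 0`.
-/

theorem sq_lt_twentyFour_mul_mul (a k z : ℝ) (hz : 1 ≤ z ^ 2)
    (h₁ : 0 < 45 * a ^ 2 + 4 - 3 * k) (h₂ : 0 < 4 * (90 * a ^ 2 - 15 * a + 4) - 27 * k) :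
    (20 * (3 * a + 2) * z) ^ 2 < 24 * (30 * a ^ 2 + 20 * a + 8 - k) * (10 * z ^ 2 - 1) := by
  have gap : 24 * (30 * a ^ 2 + 20 * a + 8 - k) * (10 * z ^ 2 - 1) - (20 * (3 * a + 2) * z) ^ 2
      = 16 * (5 * (45 * a ^ 2 + 4 - 3 * k) * z ^ 2 - 45 * a ^ 2 - 30 * a - 12) + 24 * k := by
    ring
  have hz' : 45 * a ^ 2 + 4 - 3 * k ≤ (45 * a ^ 2 + 4 - 3 * k) * z ^ 2 :=
    le_mul_of_one_le_right h₁.le hz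
  linarith

/-- Real-number inequality chain from the ampleness proof: the AM–GM inequality
(A+B)² ≥ 4AB for positive reals, and the consequence
(6x + Ky)² − (20(3a+2)z)² > 0 when xy = 10z² − 1, x, y > 0, z² ≥ 1,
K = 30a²+20a+8−k > 0, 45a²+4−3k > 0 and 4(90a²−15a+4)−27k > 0 with a ≥ 1. -/
theorem stmt_18 :
    (∀ A B : ℝ, 0 < A → 0 < B → 4 * A * B ≤ (A + B) ^ 2) ∧
    (∀ x y z a k : ℝ, x * y = 10 * z ^ 2 - 1 → 0 < x → 0 < y → 1 ≤ z ^ 2 → 1 ≤ a →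
      0 < 30 * a ^ 2 + 20 * a + 8 - k →
      0 < 45 * a ^ 2 + 4 - 3 * k →
      0 < 4 * (90 * a ^ 2 - 15 * a + 4) - 27 * k →
      0 < (6 * x + (30 * a ^ 2 + 20 * a + 8 - k) * y) ^ 2 - (20 * (3 * a + 2) * z) ^ 2) := by
  refine ⟨fun A B _ _ ↦ four_mul_le_sq_add A B, ?_⟩
  intro x y z a k hxy _ _ hz _ _ h₁ h₂
  set K := 30 * a ^ 2 + 20 * a + 8 - k
  rw [sub_pos]
  calc (20 * (3 * a + 2) * z) ^ 2
      < 24 * K * (10 * z ^ 2 - 1) := sq_lt_twentyFour_mul_mul a k z hz h₁ h₂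
    _ = 4 * (6 * x) * (K * y) := by rw [← hxy]; ring
    _ ≤ (6 * x + K * y) ^ 2 := four_mul_le_sq_add _ _
end
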